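/- arXiv:math/0702388 — 4 statements merged into one kernel-verified Lean document; each statement's English description precedes it below -/
import Mathlib

section
/- (Naiman's lemma) Let A be a bounded operator on the complex Hilbert space ℓ²(ℤ) of finite width, that is, there exists w such that the matrix entries satisfy A_{kℓ} = 0 whenever |k − ℓ| > w. If A commutes with S^p + S^{−p} for some p ≥ 1, then A commutes with S^p. -/
open scoped ComplexConjugate

noncomputable section

/-- The two-sided Hilbert space `ℓ²(ℤ)`. -/
abbrev HZ : Type := lp (fun _ : ℤ => ℂ) 2

/-- The standard orthonormal basis vectors of `ℓ²(ℤ)`. -/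
def deltaZ (k : ℤ) : HZ := lp.single 2 k 1

/-- The matrix entries `A_{kℓ} = ⟨δ_k, A δ_ℓ⟩` of a bounded operator. -/
def entryZ (A : HZ →L[ℂ] HZ) (k l : ℤ) : ℂ := inner ℂ (deltaZ k) (A (deltaZ l))

lemma deltaZ_apply (k n : ℤ) : deltaZ k n = if n = k then 1 else 0 := by
  simp [deltaZ, lp.single_apply, Pi.single_apply]

lemma inner_deltaZ_left (k : ℤ) (v : HZ) : inner ℂ (deltaZ k) v = v k := by
  simp [deltaZ, lp.inner_single_left]

lemma entryZ_eq_apply (A : HZ →L[ℂ] HZ) (k l : ℤ) : entryZ A k l = A (deltaZ l) k :=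
  inner_deltaZ_left k _

lemma entryZ_add (A B : HZ →L[ℂ] HZ) (k l : ℤ) :
    entryZ (A + B) k l = entryZ A k l + entryZ B k l :=
  inner_add_right _ _ _

lemma ext_entryZ {A B : HZ →L[ℂ] HZ} (h : ∀ k l, entryZ A k l = entryZ B k l) : A = B := by
  refine lp.ext_continuousLinearMap (by norm_num) fun l => ?_
  refine ContinuousLinearMap.ext_ring (lp.ext (funext fun k => ?_))
  simpa [entryZ_eq_apply, deltaZ] using h k l

def IsShiftBy (T : HZ →L[ℂ] HZ) (m : ℤ) : Prop :=
  ∀ (v : HZ) (n : ℤ), T v n = v (n - m)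

namespace IsShiftBy

variable {T : HZ →L[ℂ] HZ} {m : ℤ}

lemma apply_deltaZ (hT : IsShiftBy T m) (l : ℤ) : T (deltaZ l) = deltaZ (l + m) := by
  refine lp.ext (funext fun n => ?_)
  show T (deltaZ l) n = deltaZ (l + m) n
  rw [hT, deltaZ_apply, deltaZ_apply]
  exact if_congr (by omega) rfl rfl

lemma pow (hT : IsShiftBy T m) (j : ℕ) : IsShiftBy (T ^ j) (j * m) := by
  induction j with
  | zero => intro v n; simp
  | succ j ih =>
    intro v n
    rw [pow_succ, mul_apply_eq_comp, ih, hT, sub_sub]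
    push_cast
    ring_nf

lemma adjoint (hT : IsShiftBy T m) : IsShiftBy (ContinuousLinearMap.adjoint T) (-m) := by
  intro v n
  rw [← inner_deltaZ_left, ContinuousLinearMap.adjoint_inner_right, hT.apply_deltaZ,
    inner_deltaZ_left, sub_neg_eq_add]

lemma entryZ_mul_right (hT : IsShiftBy T m) (A : HZ →L[ℂ] HZ) (k l : ℤ) :
    entryZ (A * T) k l = entryZ A k (l + m) := by
  rw [entryZ, mul_apply_eq_comp, hT.apply_deltaZ, entryZ]

lemma entryZ_mul_left (hT : IsShiftBy T m) (A : HZ →L[ℂ] HZ) (k l : ℤ) :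
    entryZ (T * A) k l = entryZ A (k - m) l := by
  rw [entryZ_eq_apply, mul_apply_eq_comp, hT, entryZ_eq_apply]

end IsShiftBy

/-- Write `B k l := a k (l + p) - a (k - p) l`. The relation makes `B` invariant under
`(k, l) ↦ (k + p, l - p)`, which moves `k - l` by `2p`, while finite width confines the support
of `B` to the strip `|k - l - p| ≤ w`. -/
theorem eq_of_add_eq_add_of_width {M : Type*} [AddCommGroup M] {a : ℤ → ℤ → M} {w p : ℕ}
    (hw : ∀ k l, (w : ℤ) < |k - l| → a k l = 0) (hp : 0 < p)
    (h : ∀ k l, a k (l + p) + a k (l - p) = a (k - p) l + a (k + p) l) (k l : ℤ) :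
    a k (l + p) = a (k - p) l := by
  set B : ℤ → ℤ → M := fun k l => a k (l + p) - a (k - p) l with hB
  have shift : ∀ k l, B (k + p) (l - p) = B k l := fun k l => by
    simp only [hB, sub_add_cancel, add_sub_cancel_right, sub_eq_sub_iff_add_eq_add]
    rw [add_comm, ← h, add_comm]
  have orbit : ∀ n : ℕ, B (k + n * p) (l - n * p) = B k l := fun n => by
    induction n with
    | zero => simp
    | succ n ih =>
      rw [← ih, ← shift (k + n * p)]
      congr 1 <;> push_cast <;> ring
  have support : ∀ k l : ℤ, (w : ℤ) < |k - l - p| → B k l = 0 := fun k l hkl => by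
    simp only [hB]
    rw [hw k (l + p) (by rwa [← sub_sub]), hw (k - p) l (by rwa [sub_right_comm]), sub_zero]
  rw [← sub_eq_zero]
  change B k l = 0
  rw [← orbit (w + (k - l - p).natAbs + 1)]
  apply support
  refine lt_of_lt_of_le ?_ (le_abs_self _)
  have hp1 : (1 : ℤ) ≤ p := by exact_mod_cast hp
  have hN : (w + |k - l - p| + 1 : ℤ) ≤ (w + |k - l - p| + 1) * p :=
    le_mul_of_one_le_right (by positivity) hp1
  have hd := neg_abs_le (k - l - p)
  push_cast [Int.natCast_natAbs]
  linarith [abs_nonneg (k - l - p), w.cast_nonneg (α := ℤ)]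

/-- Naiman's lemma: a bounded operator of finite width on `ℓ²(ℤ)`
commuting with `S^p + S^{−p}` commutes with `S^p`. -/
theorem statement6
    (A : HZ →L[ℂ] HZ)
    (hwidth : ∃ w : ℕ, ∀ k l : ℤ, (w : ℤ) < |k - l| → entryZ A k l = 0)
    (S : HZ →L[ℂ] HZ)
    (hS : ∀ (u : HZ) (n : ℤ), (S u) n = u (n - 1))
    (p : ℕ) (hp : 1 ≤ p)
    (hcomm : A * (S ^ p + (ContinuousLinearMap.adjoint S) ^ p)
      = (S ^ p + (ContinuousLinearMap.adjoint S) ^ p) * A) :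
    A * S ^ p = S ^ p * A := by
  obtain ⟨w, hw⟩ := hwidth
  have hS1 : IsShiftBy S 1 := hS
  have hSp : IsShiftBy (S ^ p) p := by simpa using hS1.pow p
  have hTp : IsShiftBy (ContinuousLinearMap.adjoint S ^ p) (-p) := by
    simpa using hS1.adjoint.pow p
  refine ext_entryZ fun k l => ?_
  rw [hSp.entryZ_mul_right, hSp.entryZ_mul_left]
  refine eq_of_add_eq_add_of_width hw hp (fun k l => ?_) k l
  have hkl := congrArg (fun X => entryZ X k l) hcomm
  simp only [mul_add, add_mul, entryZ_add, hSp.entryZ_mul_right, hSp.entryZ_mul_left,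
    hTp.entryZ_mul_right, hTp.entryZ_mul_left, sub_neg_eq_add, ← sub_eq_add_neg] at hkl
  exact hkl
end
end

section
/- Fix a two-sided p-periodic Jacobi matrix J₀ with parameters (a⁰,b⁰) and fix ε > 0. There is a constant C, depending only on ε, such that for every sequence of Jacobi parameters (a,b) indexed by {1,2,…} with ε < a_n < ε^{−1} for all n and for all integers n ≥ m ≥ 1: |a_n − a⁰_n| + |b_n − b⁰_n| ≤ d̃_m((a,b),(a⁰,b⁰)) + C · Σ_{r=m}^{n−p+1} d̃_r((a,b), T_{J₀}), where the sum is empty when n − p + 1 < m. -/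
open scoped ComplexConjugate

noncomputable section

/-- The transfer matrix `Λ_n(x) = (1/a_n)·[[x − b_n, −1], [a_n², 0]]`. -/
def lamMat (a b : ℤ → ℝ) (n : ℤ) : Matrix (Fin 2) (Fin 2) (Polynomial ℝ) :=
  Polynomial.C (a n)⁻¹ • !![Polynomial.X - Polynomial.C (b n), -1;
    Polynomial.C ((a n) ^ 2), 0]

/-- The ordered product `Λ_n ⋯ Λ_2 Λ_1`. -/
def tMat (a b : ℤ → ℝ) : ℕ → Matrix (Fin 2) (Fin 2) (Polynomial ℝ)
  | 0 => 1
  | n + 1 => lamMat a b ((n : ℤ) + 1) * tMat a b n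

/-- The discriminant `Δ_{(a,b)}(x) = Tr(Λ_p(x) ⋯ Λ_1(x))`. -/
def disc (a b : ℤ → ℝ) (p : ℕ) : Polynomial ℝ := Matrix.trace (tMat a b p)

/-- Membership in the isospectral torus. -/
def InTorus (p : ℕ) (a0 b0 a' b' : ℤ → ℝ) : Prop :=
  (∀ n, 0 < a' n) ∧ Function.Periodic a' (p : ℤ) ∧ Function.Periodic b' (p : ℤ) ∧
    disc a' b' p = disc a0 b0 p

/-- `d̃_m((a,b),(a',b')) = Σ_{k=0}^{p−1}(|a_{m+k} − a'_{m+k}| + |b_{m+k} − b'_{m+k}|)`. -/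
def dFin (p : ℕ) (a b : ℕ → ℝ) (a' b' : ℤ → ℝ) (m : ℕ) : ℝ :=
  ∑ k ∈ Finset.range p,
    (|a (m + k) - a' ((m : ℤ) + k)| + |b (m + k) - b' ((m : ℤ) + k)|)

/-- `d̃_m((a,b), T_{J₀})`. -/
def dFinT (p : ℕ) (a0 b0 : ℤ → ℝ) (a b : ℕ → ℝ) (m : ℕ) : ℝ :=
  sInf {x : ℝ | ∃ a' b' : ℤ → ℝ, InTorus p a0 b0 a' b' ∧ x = dFin p a b a' b' m}

/-!
Two points of the isospectral torus have the same discriminant, hence, reading off its two top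
coefficients, the same product `∏ a'ₖ` and the same sum `∑ b'ₖ` over a period. A periodic point
of the torus is therefore determined on a full period by its values at `p - 1` consecutive sites,
in a Lipschitz way: for `b'` through the sum, for `a'` through the sum of logarithms, as long as
`a'` stays in a compact subset of `(0, ∞)`.

For each `r` pick a torus point nearly realising `d̃_r((a,b), T)`. Consecutive choices are both
close to `(a,b)` on the `p - 1` sites shared by the windows at `r` and `r + 1`, hence close on a
full period. Telescoping from `r = m`, where the choice is close to `J₀` through `(a,b)`, to
`r = n - p + 1`, whose window contains `n`, gives the bound. The lower bound `a' ≥ ε/2` needed for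
the `a`-part holds when every `d̃_r ≤ ε/2`; otherwise `|aₙ - a⁰ₙ|` is bounded by a constant, which
is absorbed into `C · d̃_r`.
-/

open Finset Polynomial Function

section Discriminant

variable (a b : ℤ → ℝ) (n : ℕ)

lemma tMat_succ_zero_zero : tMat a b (n + 1) 0 0 =
    C (a (n + 1))⁻¹ * ((X - C (b (n + 1))) * tMat a b n 0 0 - tMat a b n 1 0) := by
  simp [tMat, lamMat, Matrix.mul_apply, Fin.sum_univ_two]; ring

lemma tMat_succ_zero_one : tMat a b (n + 1) 0 1 =
    C (a (n + 1))⁻¹ * ((X - C (b (n + 1))) * tMat a b n 0 1 - tMat a b n 1 1) := by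
  simp [tMat, lamMat, Matrix.mul_apply, Fin.sum_univ_two]; ring

lemma tMat_succ_one_zero :
    tMat a b (n + 1) 1 0 = C ((a (n + 1))⁻¹ * a (n + 1) ^ 2) * tMat a b n 0 0 := by
  simp [tMat, lamMat, Matrix.mul_apply, Fin.sum_univ_two]

lemma tMat_succ_one_one :
    tMat a b (n + 1) 1 1 = C ((a (n + 1))⁻¹ * a (n + 1) ^ 2) * tMat a b n 0 1 := by
  simp [tMat, lamMat, Matrix.mul_apply, Fin.sum_univ_two]

lemma tMat_coeff_top_and_vanishing :
    (tMat a b n 0 0).coeff n = (∏ i ∈ range n, a (i + 1))⁻¹ ∧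
    (∀ k, n < k → (tMat a b n 0 0).coeff k = 0) ∧ (∀ k, n ≤ k → (tMat a b n 1 0).coeff k = 0) ∧
    (∀ k, n ≤ k → (tMat a b n 0 1).coeff k = 0) ∧ (∀ k, n < k → (tMat a b n 1 1).coeff k = 0) := by
  induction n with
  | zero => simp [tMat, coeff_one]; grind
  | succ n ih =>
    obtain ⟨h00, h00', h10, h01, h11⟩ := ih
    refine ⟨?_, fun k hk => ?_, fun k hk => ?_, fun k hk => ?_, fun k hk => ?_⟩
    · rw [tMat_succ_zero_zero, coeff_C_mul, coeff_sub, coeff_X_sub_C_mul, h00,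
        h00' _ n.lt_succ_self, h10 _ n.le_succ, prod_range_succ, mul_inv]
      ring
    · obtain ⟨j, rfl⟩ := Nat.exists_eq_add_of_lt hk
      rw [tMat_succ_zero_zero, coeff_C_mul, coeff_sub, coeff_X_sub_C_mul, h00' _ (by omega),
        h00' _ (by omega), h10 _ (by omega)]
      ring
    · rw [tMat_succ_one_zero, coeff_C_mul, h00' _ (by omega), mul_zero]
    · obtain ⟨j, rfl⟩ := Nat.exists_eq_add_of_le hk
      rw [tMat_succ_zero_one, coeff_C_mul, coeff_sub, show n + 1 + j = (n + j) + 1 by omega,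
        coeff_X_sub_C_mul, h01 _ (by omega), h01 _ (by omega), h11 _ (by omega)]
      ring
    · rw [tMat_succ_one_one, coeff_C_mul, h01 _ (by omega), mul_zero]

lemma tMat_coeff_sub_one :
    (tMat a b (n + 1) 0 0).coeff n =
      -(∑ i ∈ range (n + 1), b (i + 1)) * (∏ i ∈ range (n + 1), a (i + 1))⁻¹ := by
  induction n with
  | zero => rw [tMat_succ_zero_zero]; simp [tMat]; ring
  | succ n ih =>
    obtain ⟨htop, -, h10, -, -⟩ := tMat_coeff_top_and_vanishing a b (n + 1)
    rw [tMat_succ_zero_zero, coeff_C_mul, coeff_sub, coeff_X_sub_C_mul, ih, htop, h10 _ le_rfl,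
      sum_range_succ _ (n + 1), prod_range_succ _ (n + 1), mul_inv]
    push_cast; ring

lemma disc_eq_tMat_diag_add (p : ℕ) : disc a b p = tMat a b p 0 0 + tMat a b p 1 1 :=
  Matrix.trace_fin_two _

lemma disc_coeff_top :
    (disc a b (n + 1)).coeff (n + 1) = (∏ i ∈ range (n + 1), a (i + 1))⁻¹ := by
  obtain ⟨-, -, -, h01, -⟩ := tMat_coeff_top_and_vanishing a b n
  rw [disc_eq_tMat_diag_add, coeff_add, tMat_succ_one_one, coeff_C_mul, h01 _ n.le_succ, mul_zero,
    add_zero, (tMat_coeff_top_and_vanishing a b (n + 1)).1]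

lemma disc_coeff_sub_one : (disc a b (n + 1)).coeff n =
    -(∑ i ∈ range (n + 1), b (i + 1)) * (∏ i ∈ range (n + 1), a (i + 1))⁻¹ := by
  obtain ⟨-, -, -, h01, -⟩ := tMat_coeff_top_and_vanishing a b n
  rw [disc_eq_tMat_diag_add, coeff_add, tMat_succ_one_one, coeff_C_mul, h01 _ le_rfl, mul_zero,
    add_zero, tMat_coeff_sub_one]

end Discriminant

@[to_additive]
lemma Function.Periodic.prod_range_add_one {M : Type*} [CommMonoid M] {f : ℤ → M} {p : ℕ}
    (hf : Periodic f p) (s : ℤ) : ∏ k ∈ range p, f (s + 1 + k) = ∏ k ∈ range p, f (s + k) := by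
  cases p with
  | zero => simp
  | succ q =>
    rw [prod_range_succ, prod_range_succ']
    congr 1
    · refine prod_congr rfl fun k _ => ?_
      push_cast; ring_nf
    · convert hf s using 2 <;> push_cast <;> ring

@[to_additive]
lemma Function.Periodic.prod_range_eq {M : Type*} [CommMonoid M] {f : ℤ → M} {p : ℕ}
    (hf : Periodic f p) (s t : ℤ) : ∏ k ∈ range p, f (s + k) = ∏ k ∈ range p, f (t + k) := by
  have key (s : ℤ) : ∏ k ∈ range p, f (s + k) = ∏ k ∈ range p, f (0 + k) := by
    induction s using Int.induction_on with
    | zero => rfl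
    | succ i ih => rw [hf.prod_range_add_one, ih]
    | pred i ih => rw [← ih, ← hf.prod_range_add_one, sub_add_cancel]
  rw [key s, key t]

lemma Function.Periodic.exists_abs_le {f : ℤ → ℝ} {c : ℤ} (hf : Periodic f c) (hc : 0 < c) :
    ∃ B, ∀ j, |f j| ≤ B := by
  obtain ⟨B, hB⟩ := ((Set.finite_Ico 0 c).image fun j => |f j|).bddAbove
  refine ⟨B, fun j => ?_⟩
  obtain ⟨y, hy, hjy⟩ := hf.exists_mem_Ico₀ hc j
  rw [hjy]
  exact hB ⟨y, hy, rfl⟩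

lemma InTorus.prod_window_eq_and_sum_window_eq {p : ℕ} {a0 b0 a' b' a'' b'' : ℤ → ℝ}
    (hp : 1 ≤ p) (h' : InTorus p a0 b0 a' b') (h'' : InTorus p a0 b0 a'' b'') (s : ℤ) :
    ∏ k ∈ range p, a' (s + k) = ∏ k ∈ range p, a'' (s + k) ∧
      ∑ k ∈ range p, b' (s + k) = ∑ k ∈ range p, b'' (s + k) := by
  obtain ⟨q, rfl⟩ := Nat.exists_eq_add_of_le' hp
  have hdisc : disc a' b' (q + 1) = disc a'' b'' (q + 1) := h'.2.2.2.trans h''.2.2.2.symm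
  have hprod : ∏ i ∈ range (q + 1), a' (i + 1) = ∏ i ∈ range (q + 1), a'' (i + 1) :=
    inv_injective (by rw [← disc_coeff_top, ← disc_coeff_top, hdisc])
  have hsum : ∑ i ∈ range (q + 1), b' (i + 1) = ∑ i ∈ range (q + 1), b'' (i + 1) := by
    have hne : (∏ i ∈ range (q + 1), a'' (i + 1))⁻¹ ≠ 0 :=
      inv_ne_zero (prod_pos fun i _ => h''.1 _).ne'
    have := congrArg (coeff · q) hdisc
    simp only [disc_coeff_sub_one, hprod] at this
    exact neg_injective (mul_right_cancel₀ hne this)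
  simp only [add_comm _ (1 : ℤ)] at hprod hsum
  rw [h'.2.1.prod_range_eq s 1, h''.2.1.prod_range_eq s 1, h'.2.2.1.sum_range_eq s 1,
    h''.2.2.1.sum_range_eq s 1]
  exact ⟨hprod, hsum⟩

lemma Real.abs_log_sub_log_le {x y ℓ : ℝ} (hℓ : 0 < ℓ) (hx : ℓ ≤ x) (hy : ℓ ≤ y) :
    |Real.log x - Real.log y| ≤ |x - y| / ℓ := by
  wlog hxy : y ≤ x generalizing x y
  · rw [abs_sub_comm, abs_sub_comm x]; exact this hy hx (le_of_not_ge hxy)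
  have hy0 : 0 < y := hℓ.trans_le hy
  rw [abs_of_nonneg (sub_nonneg.mpr (Real.log_le_log hy0 hxy)), abs_of_nonneg (sub_nonneg.mpr hxy),
    ← Real.log_div (hy0.trans_le hxy).ne' hy0.ne']
  calc Real.log (x / y) ≤ x / y - 1 := Real.log_le_sub_one_of_pos (div_pos (hy0.trans_le hxy) hy0)
    _ = (x - y) / y := by field_simp
    _ ≤ (x - y) / ℓ := div_le_div_of_nonneg_left (sub_nonneg.mpr hxy) hℓ hy

lemma Real.abs_sub_le_mul_abs_log_sub {x y M : ℝ} (hx : 0 < x) (hy : 0 < y) (hxM : x ≤ M)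
    (hyM : y ≤ M) : |x - y| ≤ M * |Real.log x - Real.log y| := by
  wlog hxy : y ≤ x generalizing x y
  · rw [abs_sub_comm, abs_sub_comm (Real.log x)]; exact this hy hx hyM hxM (le_of_not_ge hxy)
  rw [abs_of_nonneg (sub_nonneg.mpr (Real.log_le_log hy hxy)), abs_of_nonneg (sub_nonneg.mpr hxy),
    ← Real.log_div hx.ne' hy.ne']
  calc x - y = x * (1 - (x / y)⁻¹) := by field_simp
    _ ≤ M * Real.log (x / y) :=
      mul_le_mul hxM (Real.one_sub_inv_le_log_of_pos (div_pos hx hy)) (by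
        rw [sub_nonneg, inv_le_one₀ (div_pos hx hy), one_le_div hy]; exact hxy) (hx.le.trans hxM)

def windowDist (p : ℕ) (u v : ℤ → ℝ) (s : ℤ) : ℝ := ∑ k ∈ range p, |u (s + k) - v (s + k)|

namespace windowDist

variable {p q : ℕ} {u v w : ℤ → ℝ} {s : ℤ}

lemma nonneg : 0 ≤ windowDist p u v s := sum_nonneg fun _ _ => abs_nonneg _

lemma comm : windowDist p u v s = windowDist p v u s := by
  simp only [windowDist, abs_sub_comm]

lemma triangle : windowDist p u w s ≤ windowDist p u v s + windowDist p v w s := by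
  rw [windowDist, windowDist, windowDist, ← sum_add_distrib]
  exact sum_le_sum fun _ _ => abs_sub_le _ _ _

lemma mono (h : q ≤ p) : windowDist q u v s ≤ windowDist p u v s :=
  sum_le_sum_of_subset_of_nonneg (range_subset_range.mpr h) fun _ _ _ => abs_nonneg _

lemma add_one_le : windowDist q u v (s + 1) ≤ windowDist (q + 1) u v s := by
  rw [windowDist, windowDist, sum_range_succ']
  refine le_add_of_le_of_nonneg (le_of_eq (sum_congr rfl fun k _ => ?_)) (abs_nonneg _)
  push_cast; ring_nf

lemma succ : windowDist (q + 1) u v s = windowDist q u v s + |u (s + q) - v (s + q)| :=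
  sum_range_succ _ _

lemma abs_sub_le {j : ℤ} (hj : j ∈ Set.Ico s (s + p)) : |u j - v j| ≤ windowDist p u v s := by
  rw [Set.mem_Ico] at hj
  obtain ⟨k, rfl⟩ : ∃ k : ℕ, j = s + k := ⟨(j - s).toNat, by omega⟩
  exact single_le_sum (f := fun k : ℕ => |u (s + k) - v (s + k)|) (fun _ _ => abs_nonneg _)
    (mem_range.mpr (by omega))

lemma eq_of_periodic (hu : Periodic u p) (hv : Periodic v p) (t : ℤ) :
    windowDist p u v s = windowDist p u v t :=
  Periodic.sum_range_eq (f := fun j => |u j - v j|) (fun j => by simp only [hu j, hv j]) s t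

lemma abs_sub_le_of_sum_eq
    (h : ∑ k ∈ range (q + 1), u (s + k) = ∑ k ∈ range (q + 1), v (s + k)) :
    |u (s + q) - v (s + q)| ≤ windowDist q u v s := by
  rw [sum_range_succ, sum_range_succ] at h
  have hlast : u (s + q) - v (s + q) = ∑ k ∈ range q, (v (s + k) - u (s + k)) := by
    rw [sum_sub_distrib]; linarith
  rw [hlast, windowDist]
  exact (abs_sum_le_sum_abs _ _).trans_eq (sum_congr rfl fun _ _ => abs_sub_comm _ _)

lemma le_two_mul_of_sum_eq (hp : 1 ≤ p)
    (h : ∑ k ∈ range p, u (s + k) = ∑ k ∈ range p, v (s + k)) :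
    windowDist p u v s ≤ 2 * windowDist (p - 1) u v s := by
  obtain ⟨q, rfl⟩ := Nat.exists_eq_add_of_le' hp
  rw [succ, Nat.add_sub_cancel]
  linarith [abs_sub_le_of_sum_eq h]

lemma le_of_prod_eq (hp : 1 ≤ p) {ℓ M : ℝ} (hℓ : 0 < ℓ) (hu : ∀ j, ℓ ≤ u j ∧ u j ≤ M)
    (hv : ∀ j, ℓ ≤ v j ∧ v j ≤ M) (h : ∏ k ∈ range p, u (s + k) = ∏ k ∈ range p, v (s + k)) :
    windowDist p u v s ≤ (1 + M / ℓ) * windowDist (p - 1) u v s := by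
  obtain ⟨q, rfl⟩ := Nat.exists_eq_add_of_le' hp
  have hu0 j : 0 < u j := hℓ.trans_le (hu j).1
  have hv0 j : 0 < v j := hℓ.trans_le (hv j).1
  have hlog : ∑ k ∈ range (q + 1), (Real.log ∘ u) (s + k) =
      ∑ k ∈ range (q + 1), (Real.log ∘ v) (s + k) := by
    simp only [comp_apply]
    rw [← Real.log_prod fun k _ => (hu0 _).ne', ← Real.log_prod fun k _ => (hv0 _).ne', h]
  have hlogdist : windowDist q (Real.log ∘ u) (Real.log ∘ v) s ≤ windowDist q u v s / ℓ := by
    rw [windowDist, windowDist, sum_div]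
    exact sum_le_sum fun k _ => Real.abs_log_sub_log_le hℓ (hu _).1 (hv _).1
  have hlast : |u (s + q) - v (s + q)| ≤ M * (windowDist q u v s / ℓ) :=
    (Real.abs_sub_le_mul_abs_log_sub (hu0 _) (hv0 _) (hu _).2 (hv _).2).trans <|
      mul_le_mul_of_nonneg_left ((abs_sub_le_of_sum_eq hlog).trans hlogdist)
        ((hu0 0).le.trans (hu 0).2)
  have hrearrange : M * (windowDist q u v s / ℓ) = M / ℓ * windowDist q u v s := by ring
  rw [succ, Nat.add_sub_cancel, add_mul, one_mul]
  linarith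

end windowDist

lemma bounds_of_windowDist_le_half {p : ℕ} (hp : 1 ≤ p) {x α : ℤ → ℝ} (hα : Periodic α p)
    {ε : ℝ} {s : ℤ} (hx : ∀ j ∈ Set.Ico s (s + p), ε < x j ∧ x j < ε⁻¹)
    (hd : windowDist p x α s ≤ ε / 2) (j : ℤ) : ε / 2 ≤ α j ∧ α j ≤ ε⁻¹ + ε / 2 := by
  obtain ⟨y, hy, hjy⟩ := hα.exists_mem_Ico (by exact_mod_cast hp) j s
  have hxy := abs_le.mp ((windowDist.abs_sub_le hy).trans hd)
  have hxb := hx y hy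
  rw [hjy]
  constructor <;> linarith

lemma sum_Ico_add_succ_le_two_mul {e : ℕ → ℝ} (he : ∀ r, 0 ≤ e r) (m R : ℕ) :
    ∑ r ∈ Ico m R, (e r + e (r + 1)) ≤ 2 * ∑ r ∈ Icc m R, e r := by
  have h₁ : ∑ r ∈ Ico m R, e r ≤ ∑ r ∈ Icc m R, e r :=
    sum_le_sum_of_subset_of_nonneg Ico_subset_Icc_self fun r _ _ => he r
  have h₂ : ∑ r ∈ Ico m R, e (r + 1) ≤ ∑ r ∈ Icc m R, e r := by
    rw [sum_Ico_add']
    refine sum_le_sum_of_subset_of_nonneg (fun r hr => ?_) fun r _ _ => he r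
    simp only [mem_Ico, mem_Icc] at hr ⊢; omega
  rw [sum_add_distrib]; linarith

lemma abs_sub_le_of_chain {p : ℕ} (hp : 1 ≤ p) {x g : ℤ → ℝ} (hg : Periodic g p)
    {f : ℕ → ℤ → ℝ} (hf : ∀ r, Periodic (f r) p) {e : ℕ → ℝ}
    (he : ∀ r, windowDist p x (f r) r ≤ e r) {K : ℝ} (hK0 : 0 ≤ K) {m R : ℕ}
    (hK : ∀ r ∈ Ico m R, windowDist p (f r) (f (r + 1)) ((r : ℤ) + 1) ≤
      K * windowDist (p - 1) (f r) (f (r + 1)) ((r : ℤ) + 1))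
    (hmR : m ≤ R) {j : ℤ} (hj : j ∈ Set.Ico (R : ℤ) (R + p)) :
    |x j - g j| ≤ windowDist p x g m + (2 + 2 * K) * ∑ r ∈ Icc m R, e r := by
  have he0 r : 0 ≤ e r := windowDist.nonneg.trans (he r)
  have hoverlap r : windowDist (p - 1) (f r) (f (r + 1)) ((r : ℤ) + 1) ≤ e r + e (r + 1) := by
    refine (windowDist.triangle (v := x)).trans (add_le_add ?_ ?_)
    · rw [windowDist.comm]
      refine windowDist.add_one_le.trans ?_
      rw [Nat.sub_add_cancel hp]; exact he r
    · exact (windowDist.mono (Nat.sub_le p 1)).trans (by exact_mod_cast he (r + 1))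
  have hstep r (hr : r ∈ Ico m R) :
      windowDist p (f r) (f (r + 1)) m ≤ K * (e r + e (r + 1)) := by
    rw [windowDist.eq_of_periodic (hf r) (hf (r + 1)) ((r : ℤ) + 1)]
    exact (hK r hr).trans (mul_le_mul_of_nonneg_left (hoverlap r) hK0)
  have hchain : ∀ R' ≥ m, R' ≤ R → windowDist p (f R') g m ≤
      windowDist p (f m) g m + ∑ r ∈ Ico m R', K * (e r + e (r + 1)) := by
    intro R' hmR'
    induction R', hmR' using Nat.le_induction with
    | base => simp
    | succ R' hmR' ih =>
      intro hR'
      rw [sum_Ico_succ_top hmR']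
      have htri := windowDist.triangle (p := p) (u := f (R' + 1)) (v := f R') (w := g) (s := m)
      rw [windowDist.comm (u := f (R' + 1)) (v := f R')] at htri
      linarith [ih (by omega), hstep R' (mem_Ico.mpr ⟨hmR', by omega⟩)]
  have hstart : windowDist p (f m) g m ≤ e m + windowDist p x g m := by
    have := windowDist.triangle (p := p) (u := f m) (v := x) (w := g) (s := m)
    rw [windowDist.comm (u := f m) (v := x)] at this
    linarith [he m]
  have hsum : ∑ r ∈ Ico m R, K * (e r + e (r + 1)) ≤ K * (2 * ∑ r ∈ Icc m R, e r) := by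
    rw [← mul_sum]; exact mul_le_mul_of_nonneg_left (sum_Ico_add_succ_le_two_mul he0 m R) hK0
  have hm : e m ≤ ∑ r ∈ Icc m R, e r := single_le_sum (fun r _ => he0 r) (by simp [hmR])
  have hR : e R ≤ ∑ r ∈ Icc m R, e r := single_le_sum (fun r _ => he0 r) (by simp [hmR])
  have hfinal : |x j - f R j| + |f R j - g j| ≤ e R + windowDist p (f R) g m := by
    rw [windowDist.eq_of_periodic (hf R) hg R]
    exact add_le_add ((windowDist.abs_sub_le hj).trans (he R)) (windowDist.abs_sub_le hj)
  linarith [abs_sub_le (x j) (f R j) (g j), hchain R hmR le_rfl]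

lemma abs_sub_le_of_prod_chain {p : ℕ} (hp : 1 ≤ p) {x a0 : ℤ → ℝ} (ha0 : Periodic a0 p)
    {B : ℝ} (hB : ∀ j, |a0 j| ≤ B) {ε : ℝ} (hε : 0 < ε)
    (hx : ∀ j, 1 ≤ j → ε < x j ∧ x j < ε⁻¹) {α : ℕ → ℤ → ℝ} (hα : ∀ r, Periodic (α r) p)
    (hprod : ∀ r s, ∏ k ∈ range p, α r (s + k) = ∏ k ∈ range p, α (r + 1) (s + k))
    {e : ℕ → ℝ} (he : ∀ r, windowDist p x (α r) r ≤ e r) {m R : ℕ} (hm : 1 ≤ m) (hmR : m ≤ R)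
    {j : ℤ} (hj : j ∈ Set.Ico (R : ℤ) (R + p)) :
    |x j - a0 j| ≤
      windowDist p x a0 m + (6 + 4 / ε ^ 2 + 2 * (ε⁻¹ + B) / ε) * ∑ r ∈ Icc m R, e r := by
  have he0 r : 0 ≤ e r := windowDist.nonneg.trans (he r)
  have hS : 0 ≤ ∑ r ∈ Icc m R, e r := sum_nonneg fun r _ => he0 r
  have hB0 : 0 ≤ B := (abs_nonneg _).trans (hB 0)
  have hd : 0 ≤ windowDist p x a0 m := windowDist.nonneg
  by_cases hgood : ∀ r ∈ Icc m R, e r ≤ ε / 2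
  · have hbd r (hr : r ∈ Icc m R) := bounds_of_windowDist_le_half hp (hα r)
      (fun j hj => hx j (by simp only [mem_Icc, Set.mem_Ico] at hr hj; omega))
      ((he r).trans (hgood r hr))
    have hK r (hr : r ∈ Ico m R) := windowDist.le_of_prod_eq hp (half_pos hε)
      (hbd r (Ico_subset_Icc_self hr))
      (hbd (r + 1) (by simp only [mem_Icc, mem_Ico] at hr ⊢; omega)) (hprod r (r + 1))
    have hchain := abs_sub_le_of_chain hp ha0 hα he (by positivity) hK hmR hj
    have hKeq : 2 + 2 * (1 + (ε⁻¹ + ε / 2) / (ε / 2)) = 6 + 4 / ε ^ 2 := by field_simp; ring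
    rw [hKeq] at hchain
    have : 0 ≤ 2 * (ε⁻¹ + B) / ε * ∑ r ∈ Icc m R, e r := by positivity
    linarith
  · push Not at hgood
    obtain ⟨r, hr, her⟩ := hgood
    have hxj := hx j (by simp only [Set.mem_Ico] at hj; omega)
    have hbound : |x j - a0 j| ≤ ε⁻¹ + B := by
      have := hB j
      rw [abs_le] at this ⊢; constructor <;> linarith
    have hbad : ε⁻¹ + B ≤ 2 * (ε⁻¹ + B) / ε * e r := by
      rw [div_mul_eq_mul_div, le_div_iff₀ hε]; nlinarith [inv_pos.mpr hε]
    have hr' : e r ≤ ∑ r ∈ Icc m R, e r := single_le_sum (fun r _ => he0 r) hr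
    have : 2 * (ε⁻¹ + B) / ε * e r ≤ 2 * (ε⁻¹ + B) / ε * ∑ r ∈ Icc m R, e r :=
      mul_le_mul_of_nonneg_left hr' (by positivity)
    have : 0 ≤ (6 + 4 / ε ^ 2) * ∑ r ∈ Icc m R, e r := by positivity
    linarith

lemma le_add_mul_sum_csInf {ι : Type*} (I : Finset ι) {S : ι → Set ℝ}
    (hne : ∀ i, (S i).Nonempty) {L A C : ℝ} (hC : 0 ≤ C)
    (h : ∀ t : ι → ℝ, (∀ i, t i ∈ S i) → L ≤ A + C * ∑ i ∈ I, t i) :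
    L ≤ A + C * ∑ i ∈ I, sInf (S i) := by
  refine le_of_forall_pos_le_add fun γ hγ => ?_
  set δ := γ / (C * #I + 1)
  have hδ : 0 < δ := by positivity
  choose t ht htlt using fun i =>
    exists_lt_of_csInf_lt (hne i) (lt_add_of_pos_right (sInf (S i)) hδ)
  have hδγ : C * #I * δ ≤ γ := by
    rw [mul_div_assoc', div_le_iff₀ (by positivity)]; nlinarith
  calc L ≤ A + C * ∑ i ∈ I, t i := h t ht
    _ ≤ A + C * ∑ i ∈ I, (sInf (S i) + δ) := by gcongr with i; exact (htlt i).le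
    _ = A + C * ∑ i ∈ I, sInf (S i) + C * #I * δ := by
      rw [sum_add_distrib, sum_const, nsmul_eq_mul]; ring
    _ ≤ A + C * ∑ i ∈ I, sInf (S i) + γ := by linarith

section dFin

variable {p : ℕ} (a b : ℕ → ℝ) (a' b' : ℤ → ℝ) (m : ℕ)

-- Sequences on `ℕ` are read on `ℤ` through `Int.toNat`, whose junk values at negative indices
-- never enter.
lemma dFin_eq_windowDist_add :
    dFin p a b a' b' m =
      windowDist p (fun j => a j.toNat) a' m + windowDist p (fun j => b j.toNat) b' m := by
  simp only [dFin, windowDist, ← sum_add_distrib]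
  norm_cast

lemma windowDist_fst_le_dFin : windowDist p (fun j => a j.toNat) a' m ≤ dFin p a b a' b' m := by
  rw [dFin_eq_windowDist_add]; exact le_add_of_nonneg_right windowDist.nonneg

lemma windowDist_snd_le_dFin : windowDist p (fun j => b j.toNat) b' m ≤ dFin p a b a' b' m := by
  rw [dFin_eq_windowDist_add]; exact le_add_of_nonneg_left windowDist.nonneg

lemma abs_sub_add_abs_sub_le_dFin {n : ℕ} (hmn : m ≤ n) (hn : n < m + p) :
    |a n - a' n| + |b n - b' n| ≤ dFin p a b a' b' m := by
  have hj : (n : ℤ) ∈ Set.Ico (m : ℤ) (m + p) := by simp only [Set.mem_Ico]; omega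
  have ha := windowDist.abs_sub_le (u := fun j => a j.toNat) (v := a') hj
  have hb := windowDist.abs_sub_le (u := fun j => b j.toNat) (v := b') hj
  simp only [Int.toNat_natCast] at ha hb
  rw [dFin_eq_windowDist_add]
  linarith

lemma dFinT_nonneg (a0 b0 : ℤ → ℝ) : 0 ≤ dFinT p a0 b0 a b m :=
  Real.sInf_nonneg fun _ ⟨a', b', _, hx⟩ =>
    hx ▸ windowDist.nonneg.trans (windowDist_fst_le_dFin a b a' b' m)

end dFin

lemma abs_sub_add_abs_sub_le_of_torus {p : ℕ} (hp : 1 ≤ p) {a0 b0 : ℤ → ℝ}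
    (hpera : Periodic a0 p) (hperb : Periodic b0 p) {B : ℝ} (hB : ∀ j, |a0 j| ≤ B) {ε : ℝ}
    (hε : 0 < ε) {a b : ℕ → ℝ} (hab : ∀ n : ℕ, 1 ≤ n → ε < a n ∧ a n < ε⁻¹)
    {α β : ℕ → ℤ → ℝ} (hτ : ∀ r, InTorus p a0 b0 (α r) (β r)) {m R n : ℕ} (hm : 1 ≤ m)
    (hmR : m ≤ R) (hRn : R ≤ n) (hnR : n < R + p) :
    |a n - a0 n| + |b n - b0 n| ≤ dFin p a b a0 b0 m +
      (12 + 4 / ε ^ 2 + 2 * (ε⁻¹ + B) / ε) * ∑ r ∈ Icc m R, dFin p a b (α r) (β r) r := by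
  have hj : (n : ℤ) ∈ Set.Ico (R : ℤ) (R + p) := by simp only [Set.mem_Ico]; omega
  have hwindow r := (hτ r).prod_window_eq_and_sum_window_eq hp (hτ (r + 1))
  have ha := abs_sub_le_of_prod_chain hp hpera hB hε (fun j hj => hab j.toNat (by omega))
    (fun r => (hτ r).2.1) (fun r s => (hwindow r s).1)
    (fun r => windowDist_fst_le_dFin a b (α r) (β r) r) hm hmR hj
  have hb := abs_sub_le_of_chain hp hperb (fun r => (hτ r).2.2.1)
    (fun r => windowDist_snd_le_dFin a b (α r) (β r) r) zero_le_two
    (fun r _ => windowDist.le_two_mul_of_sum_eq hp (hwindow r _).2) hmR hj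
  simp only [Int.toNat_natCast] at ha hb
  rw [dFin_eq_windowDist_add]
  linarith

/-- pointwise control of `(a,b)` by a single `d̃` distance to `J₀`
plus summed `d̃` distances to the isospectral torus. -/
theorem statement8 (p : ℕ) (hp : 1 ≤ p)
    (a0 b0 : ℤ → ℝ) (ha0pos : ∀ n, 0 < a0 n)
    (hpera : Function.Periodic a0 (p : ℤ)) (hperb : Function.Periodic b0 (p : ℤ))
    (ε : ℝ) (hε : 0 < ε) :
    ∃ C : ℝ, 0 < C ∧
      ∀ a b : ℕ → ℝ, (∀ n : ℕ, 1 ≤ n → ε < a n ∧ a n < ε⁻¹) →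
        ∀ m n : ℕ, 1 ≤ m → m ≤ n →
          |a n - a0 (n : ℤ)| + |b n - b0 (n : ℤ)| ≤
            dFin p a b a0 b0 m +
              C * ∑ r ∈ Finset.Icc m (n + 1 - p), dFinT p a0 b0 a b r := by
  obtain ⟨B, hB⟩ := hpera.exists_abs_le (by exact_mod_cast hp)
  have hB0 : 0 ≤ B := (abs_nonneg _).trans (hB 0)
  refine ⟨12 + 4 / ε ^ 2 + 2 * (ε⁻¹ + B) / ε, by positivity, fun a b hab m n hm hmn => ?_⟩
  rcases lt_or_ge n (m + p) with hn | hn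
  · exact le_add_of_le_of_nonneg (abs_sub_add_abs_sub_le_dFin a b a0 b0 m hmn hn)
      (mul_nonneg (by positivity) (sum_nonneg fun r _ => dFinT_nonneg a b r a0 b0))
  · refine le_add_mul_sum_csInf _ (S := fun r => {x | ∃ a' b', InTorus p a0 b0 a' b' ∧
        x = dFin p a b a' b' r}) (fun r => ⟨_, a0, b0, ⟨ha0pos, hpera, hperb, rfl⟩, rfl⟩)
      (by positivity) fun t ht => ?_
    choose α β hτ ht using ht
    simp only [ht]
    exact abs_sub_add_abs_sub_le_of_torus hp hpera hperb hB hε hab hτ hm (by omega) (by omega)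
      (by omega)
end
end

section
/- Let α : ℤ → ℂ with |α_n| < 1 for all n and ρ_n = (1 − |α_n|²)^{1/2}, and let L, M act on arbitrary sequences u : ℤ → ℂ by the CMV block formulas. Suppose z ∈ ℂ with z ≠ 0 and u : ℤ → ℂ satisfies L(M u) = z·u pointwise. Define v : ℤ → ℂ by v_j = (M u)_j for j even and v_j = z^{−1} (M u)_j for j odd. Then for every n ∈ ℤ: z·(u_{2n+2}, v_{2n+2})ᵀ = z·M_{2n+1}(z)·(v_{2n+1}, u_{2n+1})ᵀ and z·M_{2n+1}(z)·(v_{2n+1}, u_{2n+1})ᵀ = M_{2n+1}(z)·M_{2n}(z)·(u_{2n}, v_{2n})ᵀ, where M_n(z) = ρ_n^{−1}·[[z, −conj(α_n)], [−α_n z, 1]] is a 2×2 complex matrix. -/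
open scoped ComplexConjugate

noncomputable section

/-- `ρ_n = (1 − |α_n|²)^{1/2}`. -/
def rho (α : ℤ → ℂ) (n : ℤ) : ℝ := Real.sqrt (1 - ‖α n‖ ^ 2)

/-- The 2×2 transfer matrix `M_n(z) = ρ_n^{−1}·[[z, −conj(α_n)], [−α_n z, 1]]`. -/
def Mmat (α : ℤ → ℂ) (z : ℂ) (n : ℤ) : Matrix (Fin 2) (Fin 2) ℂ :=
  ((rho α n : ℂ))⁻¹ • !![z, -conj (α n); -(α n) * z, 1]

/-!
Both `L` and `M` are direct sums of the unitary blocks `Θ(a) = [[conj a, ρ], [ρ, -a]]`.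
Solving `(p', q') = Θ(a) (p, q)` for the pair `(q, q')` in terms of `(p', p)` gives
`(q, q') = ρ⁻¹ [[1, -conj a], [-a, 1]] (p', p)`, which is `M_n(z)` applied to `(z⁻¹ p', p)`.
Applied to the block of `M` at `2n+1` (with `p' = (Mu)_{2n+1} = z v_{2n+1}`) this is the first
identity; applied to the block of `L` at `2n` on `Mu`, where `L(Mu) = z u`, it gives
`M_{2n}(z) (u_{2n}, v_{2n}) = z (v_{2n+1}, u_{2n+1})`, and the second identity follows.
-/

namespace CMV

variable {α : ℤ → ℂ} {k : ℤ}

lemma rho_pos (h : ‖α k‖ < 1) : 0 < rho α k :=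
  Real.sqrt_pos.2 (by nlinarith [norm_nonneg (α k)])

lemma ofReal_rho_sq (h : ‖α k‖ ≤ 1) : (rho α k : ℂ) ^ 2 = 1 - conj (α k) * α k := by
  have hsq : rho α k ^ 2 = 1 - ‖α k‖ ^ 2 :=
    Real.sq_sqrt (by nlinarith [norm_nonneg (α k)])
  rw [mul_comm, Complex.mul_conj', ← Complex.ofReal_pow, hsq]
  push_cast
  ring

lemma Mmat_mulVec_of_block (h : ‖α k‖ < 1) {z w p q r : ℂ}
    (hw : z * w = conj (α k) * p + rho α k * q) (hr : r = rho α k * p - α k * q) :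
    (Mmat α z k).mulVec ![w, p] = ![q, r] := by
  have hρ : (rho α k : ℂ) ≠ 0 := Complex.ofReal_ne_zero.2 (rho_pos h).ne'
  have hρsq := ofReal_rho_sq h.le
  ext i
  fin_cases i <;>
    simp only [Mmat, Matrix.mulVec, dotProduct, Fin.sum_univ_two, Matrix.smul_apply,
      smul_eq_mul, Matrix.of_apply, Matrix.cons_val', Matrix.cons_val_zero, Matrix.cons_val_one,
      Matrix.cons_val_fin_one, Matrix.empty_val', Fin.zero_eta, Fin.mk_one] <;>
    field_simp
  · linear_combination hw
  · linear_combination -α k * hw - p * hρsq - rho α k * hr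

end CMV

/-- the transfer-matrix reformulation of the formal eigenvalue
equation `L(Mu) = z·u` for the extended CMV matrix. -/
theorem statement11 (α : ℤ → ℂ) (hα : ∀ n, ‖α n‖ < 1)
    (L M : (ℤ → ℂ) → (ℤ → ℂ))
    (hL : ∀ (u : ℤ → ℂ) (m : ℤ),
      L u (2 * m) = conj (α (2 * m)) * u (2 * m) + (rho α (2 * m) : ℂ) * u (2 * m + 1) ∧
      L u (2 * m + 1) = (rho α (2 * m) : ℂ) * u (2 * m) - α (2 * m) * u (2 * m + 1))
    (hM : ∀ (u : ℤ → ℂ) (m : ℤ),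
      M u (2 * m + 1) = conj (α (2 * m + 1)) * u (2 * m + 1)
          + (rho α (2 * m + 1) : ℂ) * u (2 * m + 2) ∧
      M u (2 * m + 2) = (rho α (2 * m + 1) : ℂ) * u (2 * m + 1)
          - α (2 * m + 1) * u (2 * m + 2))
    (z : ℂ) (hz : z ≠ 0)
    (u : ℤ → ℂ) (hu : ∀ n : ℤ, L (M u) n = z * u n)
    (v : ℤ → ℂ)
    (hv : ∀ j : ℤ, v j = if Even j then M u j else z⁻¹ * M u j) :
    ∀ n : ℤ,
      z • ![u (2 * n + 2), v (2 * n + 2)]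
          = z • (Mmat α z (2 * n + 1)).mulVec ![v (2 * n + 1), u (2 * n + 1)] ∧
      z • (Mmat α z (2 * n + 1)).mulVec ![v (2 * n + 1), u (2 * n + 1)]
          = ((Mmat α z (2 * n + 1)) * (Mmat α z (2 * n))).mulVec ![u (2 * n), v (2 * n)] := by
  intro n
  have hv_even : ∀ j, Even j → v j = M u j := fun j hj => by simp [hv, hj]
  have hv_odd : z * v (2 * n + 1) = M u (2 * n + 1) := by
    simp [hv, mul_inv_cancel_left₀ hz]
  have hodd : (Mmat α z (2 * n + 1)).mulVec ![v (2 * n + 1), u (2 * n + 1)]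
      = ![u (2 * n + 2), v (2 * n + 2)] :=
    CMV.Mmat_mulVec_of_block (hα _) (hv_odd.trans (hM u n).1)
      ((hv_even _ ⟨n + 1, by ring⟩).trans (hM u n).2)
  have heven : (Mmat α z (2 * n)).mulVec ![u (2 * n), v (2 * n)]
      = z • ![v (2 * n + 1), u (2 * n + 1)] := by
    rw [hv_even _ (even_two_mul n), Matrix.smul_cons, Matrix.smul_cons, Matrix.smul_empty,
      smul_eq_mul, smul_eq_mul, hv_odd]
    exact CMV.Mmat_mulVec_of_block (hα _) ((hu _).symm.trans (hL (M u) n).1)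
      ((hu _).symm.trans (hL (M u) n).2)
  refine ⟨by rw [hodd], ?_⟩
  rw [← Matrix.mulVec_mulVec, heven, Matrix.mulVec_smul]
end
end

section
/- Let n > ℓ ≥ 1 be integers, U ⊆ ℝⁿ open, F : ℝⁿ → ℝ^ℓ a C^∞ map on U, and y₀ ∈ ℝ^ℓ. Suppose T := U ∩ F^{−1}({y₀}) is nonempty and compact, and that the derivative DF(x) has rank ℓ for every x ∈ T (so T is a smooth manifold of dimension n − ℓ). Then for every compact set K ⊆ U with T contained in the interior of K, there exist constants c_K, d_K ∈ (0,∞) such that for all x ∈ K: c_K · |F(x) − y₀| ≤ dist(x, T) ≤ d_K · |F(x) − y₀|. -/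
noncomputable section

open Metric Set Filter

/-- Pure compactness: a local multiplicative bound `g ≤ C·h` near every point of a compact
set yields a global one on the compact set, provided `h ≥ 0`. -/
lemma loc_to_glob {E : Type*} [MetricSpace E] {K : Set E} (hK : IsCompact K)
    (g h : E → ℝ) (hh : ∀ x, 0 ≤ h x)
    (hloc : ∀ a ∈ K, ∃ C : ℝ, 0 < C ∧ ∀ᶠ x in nhds a, g x ≤ C * h x) :
    ∃ C : ℝ, 0 < C ∧ ∀ x ∈ K, g x ≤ C * h x := by
  choose! C hCpos hCev using hloc
  obtain ⟨t, htK, hcov⟩ := hK.elim_nhds_subcover (fun a => {x | g x ≤ C a * h x})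
    (fun a ha => hCev a ha)
  have hsum : (0:ℝ) ≤ ∑ a ∈ t, C a := Finset.sum_nonneg fun a ha => (hCpos a (htK a ha)).le
  refine ⟨1 + ∑ a ∈ t, C a, by linarith, ?_⟩
  · intro x hx
    obtain ⟨a, hat, hxa⟩ := Set.mem_iUnion₂.1 (hcov hx)
    have h1 : C a ≤ 1 + ∑ b ∈ t, C b := by
      have := Finset.single_le_sum (f := C) (fun b hb => (hCpos b (htK b hb)).le) hat
      linarith
    calc g x ≤ C a * h x := hxa
      _ ≤ (1 + ∑ b ∈ t, C b) * h x := mul_le_mul_of_nonneg_right h1 (hh x)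

/-- Quantitative local surjectivity: if `f` is strictly differentiable at `a` with surjective
derivative and `f a = y0`, then points `x` near `a` admit a solution `z` of `f z = y0`
(inside any given neighborhood `W` of `a`) with `dist x z ≤ C · ‖f x - y0‖`. -/
lemma local_ift {E F : Type*} [NormedAddCommGroup E] [NormedSpace ℝ E] [CompleteSpace E]
    [NormedAddCommGroup F] [NormedSpace ℝ F] [CompleteSpace F]
    {f : E → F} {f' : E →L[ℝ] F} {a : E}
    (hf : HasStrictFDerivAt f f' a) (hsurj : LinearMap.range (f' : E →ₗ[ℝ] F) = ⊤)
    {y0 : F} (hfa : f a = y0) {W : Set E} (hW : W ∈ nhds a) :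
    ∃ C : ℝ, 0 < C ∧ ∀ᶠ x in nhds a, ∃ z ∈ W, f z = y0 ∧ dist x z ≤ C * ‖f x - y0‖ := by
  set f'symm := f'.nonlinearRightInverseOfSurjective hsurj with hf'symm
  have Npos : (0:ℝ) < f'symm.nnnorm :=
    f'.nonlinearRightInverseOfSurjective_nnnorm_pos hsurj
  set c : NNReal := f'symm.nnnorm⁻¹ / 2 with hc
  have cpos : 0 < c := by
    rw [hc]
    have : (0:NNReal) < f'symm.nnnorm⁻¹ := by
      rw [pos_iff_ne_zero, ne_eq, inv_eq_zero]
      exact fun h => by simp [h] at Npos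
    positivity
  obtain ⟨s, s_nhds, hs⟩ := hf.approximates_deriv_on_nhds (Or.inr cpos)
  obtain ⟨ε, εpos, hε⟩ : ∃ ε > 0, closedBall a ε ⊆ s ∩ W :=
    (Metric.nhds_basis_closedBall.mem_iff).1 (inter_mem s_nhds hW)
  set N : ℝ := (f'symm.nnnorm : ℝ) with hN
  set C : ℝ := 2 * N with hC
  have Cpos : 0 < C := by positivity
  refine ⟨C, Cpos, ?_⟩
  have hcont : ContinuousAt f a := hf.continuousAt
  have htend : Tendsto (fun x => ‖f x - y0‖) (nhds a) (nhds 0) := by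
    have : Tendsto (fun x => ‖f x - y0‖) (nhds a) (nhds ‖f a - y0‖) :=
      ((hcont.sub continuousAt_const).norm)
    simpa [hfa] using this
  have h1 : ∀ᶠ x in nhds a, ‖f x - y0‖ < ε / (2 * C) :=
    htend.eventually_lt_const (by positivity)
  have h2 : ∀ᶠ x in nhds a, dist x a < ε / 2 :=
    Metric.eventually_nhds_iff_ball.2 ⟨ε/2, by positivity, fun y hy => hy⟩
  filter_upwards [h1, h2] with x hx1 hx2
  set r : ℝ := C * ‖f x - y0‖ with hr
  have hr0 : 0 ≤ r := by positivity
  have hrε : r ≤ ε / 2 := by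
    have := (mul_lt_mul_of_pos_left hx1 Cpos).le
    calc r ≤ C * (ε / (2*C)) := this
      _ = ε / 2 := by field_simp
  have hsub : closedBall x r ⊆ closedBall a ε := by
    intro z hz
    rw [mem_closedBall] at hz ⊢
    calc dist z a ≤ dist z x + dist x a := dist_triangle _ _ _
      _ ≤ r + ε/2 := by have := hx2.le; linarith
      _ ≤ ε := by linarith
  have hsurjOn := hs.surjOn_closedBall_of_nonlinearRightInverse f'symm hr0
    (fun z hz => (hε (hsub hz)).1)
  have hcoe : ((c : NNReal) : ℝ) = N⁻¹ / 2 := by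
    rw [hc]; push_cast; rfl
  have hy0 : y0 ∈ closedBall (f x) (((f'symm.nnnorm : ℝ)⁻¹ - c) * r) := by
    rw [mem_closedBall, dist_eq_norm, norm_sub_rev]
    have : ((f'symm.nnnorm : ℝ)⁻¹ - c) * r = ‖f x - y0‖ := by
      rw [hcoe, hr, hC, ← hN]
      field_simp
      ring
    rw [this]
  obtain ⟨z, hz, hfz⟩ := hsurjOn hy0
  exact ⟨z, (hε (hsub hz)).2, hfz, by
    rw [dist_comm]; exact mem_closedBall.1 hz⟩

/-- two-sided comparison of `|F(x) − y₀|` with the distance to the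
compact level set `T = U ∩ F⁻¹({y₀})`, near which `DF` has full rank `ℓ`. -/
theorem statement12 (n l : ℕ) (hl : 1 ≤ l) (hln : l < n)
    (U : Set (EuclideanSpace ℝ (Fin n))) (hU : IsOpen U)
    (F : EuclideanSpace ℝ (Fin n) → EuclideanSpace ℝ (Fin l))
    (hF : ContDiffOn ℝ (⊤ : ℕ∞) F U)
    (y0 : EuclideanSpace ℝ (Fin l))
    (T : Set (EuclideanSpace ℝ (Fin n))) (hT : T = U ∩ F ⁻¹' {y0})
    (hTne : T.Nonempty) (hTc : IsCompact T)
    (hrank : ∀ x ∈ T, LinearMap.rank (fderiv ℝ F x).toLinearMap = (l : Cardinal)) :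
    ∀ K : Set (EuclideanSpace ℝ (Fin n)), K ⊆ U → IsCompact K → T ⊆ interior K →
      ∃ c d : ℝ, 0 < c ∧ 0 < d ∧
        ∀ x ∈ K, c * ‖F x - y0‖ ≤ Metric.infDist x T ∧
          Metric.infDist x T ≤ d * ‖F x - y0‖ := by
  intro K hKU hKc _hKint
  have hTclosed : IsClosed T := hTc.isClosed
  have hTU : T ⊆ U := by rw [hT]; exact Set.inter_subset_left
  have hFy0 : ∀ x ∈ T, F x = y0 := by
    intro x hx; rw [hT] at hx; exact hx.2
  have hmemT : ∀ x ∈ U, F x = y0 → x ∈ T := by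
    intro x hx hfx; rw [hT]; exact ⟨hx, hfx⟩
  have hFcontAt : ∀ a ∈ U, ContinuousAt F a := fun a ha =>
    hF.continuousOn.continuousAt (hU.mem_nhds ha)
  -- local bound A : ‖F x - y0‖ ≤ C * infDist x T near each point of K
  have hlocA : ∀ a ∈ K, ∃ C : ℝ, 0 < C ∧
      ∀ᶠ x in nhds a, ‖F x - y0‖ ≤ C * Metric.infDist x T := by
    intro a haK
    by_cases haT : a ∈ T
    · -- Lipschitz estimate
      have hca : ContDiffAt ℝ 1 F a :=
        (hF.contDiffAt (hU.mem_nhds (hKU haK))).of_le (by simp)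
      obtain ⟨L, t, ht, hlip⟩ := hca.exists_lipschitzOnWith
      obtain ⟨δ, δpos, hδ⟩ : ∃ δ > 0, Metric.ball a δ ⊆ t :=
        Metric.mem_nhds_iff.1 ht
      refine ⟨(L : ℝ) + 1, by positivity, ?_⟩
      have hball : ∀ᶠ x in nhds a, dist x a < δ / 3 :=
        Metric.eventually_nhds_iff_ball.2 ⟨δ/3, by positivity, fun y hy => hy⟩
      filter_upwards [hball] with x hx
      obtain ⟨t0, ht0T, ht0d⟩ := hTc.exists_infDist_eq_dist hTne x
      have hd1 : dist x t0 ≤ dist x a := by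
        rw [← ht0d]; exact Metric.infDist_le_dist_of_mem haT
      have hxt : x ∈ t := hδ (by
        rw [Metric.mem_ball]; linarith)
      have ht0t : t0 ∈ t := hδ (by
        rw [Metric.mem_ball]
        calc dist t0 a ≤ dist t0 x + dist x a := dist_triangle _ _ _
          _ = dist x t0 + dist x a := by rw [dist_comm]
          _ < δ := by linarith)
      have := hlip.dist_le_mul x hxt t0 ht0t
      rw [← hFy0 t0 ht0T, ← dist_eq_norm]
      calc dist (F x) (F t0) ≤ (L : ℝ) * dist x t0 := this
        _ ≤ ((L : ℝ) + 1) * Metric.infDist x T := by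
            rw [ht0d]
            have h0 : (0:ℝ) ≤ dist x t0 := dist_nonneg
            nlinarith
    · -- away from T : infDist bounded below
      have hr : 0 < Metric.infDist a T :=
        (hTclosed.notMem_iff_infDist_pos hTne).1 haT
      set r := Metric.infDist a T with hrdef
      have hMa : ContinuousAt (fun x => ‖F x - y0‖) a :=
        ((hFcontAt a (hKU haK)).sub continuousAt_const).norm
      have h1 : ∀ᶠ x in nhds a, ‖F x - y0‖ < ‖F a - y0‖ + 1 :=
        hMa.eventually_lt_const (by linarith [norm_nonneg (F a - y0)])
      have h2 : ∀ᶠ x in nhds a, dist x a < r / 2 :=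
        Metric.eventually_nhds_iff_ball.2 ⟨r/2, by positivity, fun y hy => hy⟩
      refine ⟨2 * (‖F a - y0‖ + 1) / r, by positivity, ?_⟩
      filter_upwards [h1, h2] with x hx1 hx2
      have h3 : r / 2 ≤ Metric.infDist x T := by
        have := Metric.infDist_le_infDist_add_dist (x := a) (y := x) (s := T)
        rw [dist_comm] at hx2
        linarith
      calc ‖F x - y0‖ ≤ ‖F a - y0‖ + 1 := hx1.le
        _ = (2 * (‖F a - y0‖ + 1) / r) * (r/2) := by field_simp
        _ ≤ (2 * (‖F a - y0‖ + 1) / r) * Metric.infDist x T := by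
            apply mul_le_mul_of_nonneg_left h3 (by positivity)
  -- local bound B : infDist x T ≤ C * ‖F x - y0‖ near each point of K
  have hlocB : ∀ a ∈ K, ∃ C : ℝ, 0 < C ∧
      ∀ᶠ x in nhds a, Metric.infDist x T ≤ C * ‖F x - y0‖ := by
    intro a haK
    by_cases haT : a ∈ T
    · -- apply the quantitative implicit function theorem
      have hca : ContDiffAt ℝ (⊤ : ℕ∞) F a := hF.contDiffAt (hU.mem_nhds (hKU haK))
      have hstrict : HasStrictFDerivAt F (fderiv ℝ F a) a :=
        hca.hasStrictFDerivAt (by simp)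
      have hsurj : LinearMap.range (fderiv ℝ F a : EuclideanSpace ℝ (Fin n) →ₗ[ℝ] EuclideanSpace ℝ (Fin l)) = ⊤ := by
        have h1 : Module.rank ℝ (LinearMap.range (fderiv ℝ F a).toLinearMap)
            = (l : Cardinal) := hrank a haT
        have h2 : Module.finrank ℝ
            (LinearMap.range (fderiv ℝ F a).toLinearMap) = l :=
          Module.finrank_eq_of_rank_eq h1
        have h3 : Module.finrank ℝ (EuclideanSpace ℝ (Fin l)) = l :=
          finrank_euclideanSpace_fin
        have h4 : LinearMap.range (fderiv ℝ F a : EuclideanSpace ℝ (Fin n) →ₗ[ℝ] EuclideanSpace ℝ (Fin l))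
            = LinearMap.range (fderiv ℝ F a).toLinearMap := rfl
        rw [h4]
        exact Submodule.eq_top_of_finrank_eq (by rw [h2, h3])
      obtain ⟨C, hCpos, hCev⟩ := local_ift hstrict hsurj (hFy0 a haT)
        (hU.mem_nhds (hKU haK))
      refine ⟨C, hCpos, ?_⟩
      filter_upwards [hCev] with x hx
      obtain ⟨z, hzU, hfz, hdist⟩ := hx
      have hzT : z ∈ T := hmemT z hzU hfz
      calc Metric.infDist x T ≤ dist x z := Metric.infDist_le_dist_of_mem hzT
        _ ≤ C * ‖F x - y0‖ := hdist
    · -- away from T : ‖F x - y0‖ bounded below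
      have haU : a ∈ U := hKU haK
      have hFa : F a ≠ y0 := fun h => haT (hmemT a haU h)
      have hr : 0 < ‖F a - y0‖ := by
        rw [norm_pos_iff]; exact sub_ne_zero.2 hFa
      set r := ‖F a - y0‖ with hrdef
      have hMa : ContinuousAt (fun x => ‖F x - y0‖) a :=
        ((hFcontAt a haU).sub continuousAt_const).norm
      have h1 : ∀ᶠ x in nhds a, r / 2 < ‖F x - y0‖ :=
        hMa.eventually_const_lt (by linarith)
      have h2 : ∀ᶠ x in nhds a, dist x a < 1 :=
        Metric.eventually_nhds_iff_ball.2 ⟨1, one_pos, fun y hy => hy⟩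
      refine ⟨2 * (Metric.infDist a T + 1) / r, by
        have := Metric.infDist_nonneg (x := a) (s := T); positivity, ?_⟩
      filter_upwards [h1, h2] with x hx1 hx2
      have h3 : Metric.infDist x T ≤ Metric.infDist a T + 1 := by
        have := Metric.infDist_le_infDist_add_dist (x := x) (y := a) (s := T)
        linarith
      have hD : (0:ℝ) ≤ Metric.infDist a T := Metric.infDist_nonneg
      calc Metric.infDist x T ≤ Metric.infDist a T + 1 := h3
        _ = (2 * (Metric.infDist a T + 1) / r) * (r/2) := by field_simp
        _ ≤ (2 * (Metric.infDist a T + 1) / r) * ‖F x - y0‖ := by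
            apply mul_le_mul_of_nonneg_left hx1.le (by positivity)
  obtain ⟨cA, hcA, hA⟩ := loc_to_glob hKc _ _ (fun x => Metric.infDist_nonneg) hlocA
  obtain ⟨d, hd, hB⟩ := loc_to_glob hKc _ _ (fun x => norm_nonneg _) hlocB
  refine ⟨cA⁻¹, d, by positivity, hd, fun x hx => ⟨?_, hB x hx⟩⟩
  have h := hA x hx
  rw [inv_mul_le_iff₀ hcA]
  exact h
end
end
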